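/- Suppose R satisfies the curvature-type symmetries and the q-invariance R(qx,qy,qz,qu) = R(x,y,z,u). Let x ∈ ℝ³ be such that {x, qx, q²x} is an orthonormal basis with respect to g, and let u ∈ ℝ³ induce a q-basis with g(u,u) = 1. Set c = g(u, qu) (the cosine of the angle φ = ∠(u,qu)). Then μ(u, qu) − μ(x, qx) = (2c/(1−c))·R(x, qx, x, q²x). -/

import Mathlib

/-!
In the `g`-orthonormal basis `e₁ = x, e₂ = qx, e₃ = q²x` the map `q` permutes the bivectors
cyclically, `e₁∧e₂ ↦ e₂∧e₃ ↦ e₁∧e₃ ↦ e₁∧e₂`, so a `q`-invariant curvature tensor, viewed as a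
quadratic form on bivectors, is circulant: its diagonal entries are `K = R(x,qx,x,qx)` and its
off-diagonal entries are `L = R(x,qx,x,q²x)`. For a unit vector `u = a e₁ + b e₂ + d e₃` we have
`qu = -d e₁ + a e₂ + b e₃`, and the Plücker coordinates of `u ∧ qu` give
`R(u,qu,u,qu) = K(1 - c²) + 2c(1 + c)L` with `c = g(u,qu)`. Dividing by the Gram determinant
`1 - c²`, which is positive because `u, qu` are independent, gives `μ(u,qu) = K + 2cL/(1 - c)`,
while `μ(x,qx) = K`.
-/

/-- The metric `g` determined by the circulant matrix with rows `(A,B,B),(B,A,B),(B,B,A)`. -/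
def g (A B : ℝ) (x y : Fin 3 → ℝ) : ℝ :=
  A * (x 0 * y 0 + x 1 * y 1 + x 2 * y 2) +
    B * (x 0 * y 1 + x 0 * y 2 + x 1 * y 0 + x 1 * y 2 + x 2 * y 0 + x 2 * y 1)

/-- The structure `q`, given by `q(x¹,x²,x³) = (-x²,-x³,-x¹)`, with `q³ = -id`. -/
def q (x : Fin 3 → ℝ) : Fin 3 → ℝ := ![-(x 1), -(x 2), -(x 0)]

/-- The sectional curvature of the 2-plane spanned by `x, y`. -/
noncomputable def sec (A B : ℝ) (R : MultilinearMap ℝ (fun _ : Fin 4 => Fin 3 → ℝ) ℝ)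
    (x y : Fin 3 → ℝ) : ℝ :=
  R ![x, y, x, y] / (g A B x x * g A B y y - (g A B x y) ^ 2)

theorem LinearMap.IsAlt.apply_comb₃ {k V M : Type*} [CommRing k] [AddCommGroup V] [Module k V]
    [AddCommGroup M] [Module k M] {β : V →ₗ[k] V →ₗ[k] M} (hβ : β.IsAlt)
    (e₁ e₂ e₃ : V) (a b d a' b' d' : k) :
    β (a • e₁ + b • e₂ + d • e₃) (a' • e₁ + b' • e₂ + d' • e₃) =
      (a * b' - b * a') • β e₁ e₂ + (b * d' - d * b') • β e₂ e₃ +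
        (a * d' - d * a') • β e₁ e₃ := by
  simp only [map_add, map_smul, LinearMap.add_apply, LinearMap.smul_apply, hβ.self_eq_zero,
    ← hβ.neg e₁ e₂, ← hβ.neg e₁ e₃, ← hβ.neg e₂ e₃]
  module

theorem LinearMap.map_comb₃_of_cube_eq_neg {k V : Type*} [CommRing k] [AddCommGroup V]
    [Module k V] {Q : V →ₗ[k] V} (hQ : ∀ y, Q (Q (Q y)) = -y) (x : V) (a b d : k) :
    Q (a • x + b • Q x + d • Q (Q x)) = (-d) • x + a • Q x + b • Q (Q x) := by
  simp only [map_add, map_smul, hQ]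
  module

namespace MultilinearMap

variable {k V : Type*} [CommRing k] [AddCommGroup V] [Module k V]
  (R : MultilinearMap k (fun _ : Fin 4 => V) k)

def bilinearFirstTwo (z w : V) : V →ₗ[k] V →ₗ[k] k :=
  LinearMap.mk₂ k (fun a b => R ![a, b, z, w])
    (fun a a' b => by change R.curryLeft (a + a') _ = R.curryLeft a _ + R.curryLeft a' _; simp)
    (fun c a b => by change R.curryLeft (c • a) _ = c • R.curryLeft a _; simp)
    (fun a b b' => by
      change (R.curryLeft a).curryLeft (b + b') _ =
        (R.curryLeft a).curryLeft b _ + (R.curryLeft a).curryLeft b' _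
      simp)
    (fun c a b => by
      change (R.curryLeft a).curryLeft (c • b) _ = c • (R.curryLeft a).curryLeft b _
      simp)

variable {R}

theorem map_neg_second (a b z w : V) : R ![a, -b, z, w] = -R ![a, b, z, w] :=
  (R.bilinearFirstTwo z w a).map_neg b

theorem map_neg_fourth (hpair : ∀ a b z w, R ![a, b, z, w] = R ![z, w, a, b]) (a b z w : V) :
    R ![a, b, z, -w] = -R ![a, b, z, w] := by
  rw [hpair, map_neg_second, hpair]

theorem map_swap_left (halt : ∀ a z w, R ![a, a, z, w] = 0) (a b z w : V) :
    R ![b, a, z, w] = -R ![a, b, z, w] :=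
  ((show (R.bilinearFirstTwo z w).IsAlt from (halt · z w)).neg a b).symm

theorem map_swap_right (halt : ∀ a z w, R ![a, a, z, w] = 0)
    (hpair : ∀ a b z w, R ![a, b, z, w] = R ![z, w, a, b]) (a b z w : V) :
    R ![a, b, w, z] = -R ![a, b, z, w] := by
  rw [hpair, map_swap_left halt, hpair]

theorem apply_comb₃_of_curvature (halt : ∀ a z w, R ![a, a, z, w] = 0)
    (hpair : ∀ a b z w, R ![a, b, z, w] = R ![z, w, a, b])
    (e₁ e₂ e₃ : V) (a b d a' b' d' : k) :
    R ![a • e₁ + b • e₂ + d • e₃, a' • e₁ + b' • e₂ + d' • e₃,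
        a • e₁ + b • e₂ + d • e₃, a' • e₁ + b' • e₂ + d' • e₃] =
      (a * b' - b * a') ^ 2 * R ![e₁, e₂, e₁, e₂] + (b * d' - d * b') ^ 2 * R ![e₂, e₃, e₂, e₃] +
        (a * d' - d * a') ^ 2 * R ![e₁, e₃, e₁, e₃] +
        2 * (a * b' - b * a') * (b * d' - d * b') * R ![e₁, e₂, e₂, e₃] +
        2 * (b * d' - d * b') * (a * d' - d * a') * R ![e₂, e₃, e₁, e₃] +
        2 * (a * b' - b * a') * (a * d' - d * a') * R ![e₁, e₂, e₁, e₃] := by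
  set u := a • e₁ + b • e₂ + d • e₃
  set v := a' • e₁ + b' • e₂ + d' • e₃
  have expand : ∀ z w, R ![u, v, z, w] = (a * b' - b * a') * R ![e₁, e₂, z, w] +
      (b * d' - d * b') * R ![e₂, e₃, z, w] + (a * d' - d * a') * R ![e₁, e₃, z, w] :=
    fun z w => LinearMap.IsAlt.apply_comb₃ (β := R.bilinearFirstTwo z w) (halt · z w)
      e₁ e₂ e₃ a b d a' b' d'
  rw [expand, hpair e₁ e₂, hpair e₂ e₃, hpair e₁ e₃, expand, expand, expand,
    hpair e₂ e₃ e₁ e₂, hpair e₁ e₃ e₁ e₂, hpair e₁ e₃ e₂ e₃]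
  ring

theorem map_orbit_sectional (halt : ∀ a z w, R ![a, a, z, w] = 0)
    (hpair : ∀ a b z w, R ![a, b, z, w] = R ![z, w, a, b]) {Q : V → V}
    (hRQ : ∀ a b z w, R ![Q a, Q b, Q z, Q w] = R ![a, b, z, w]) (hQ : ∀ y, Q (Q (Q y)) = -y)
    (x : V) :
    R ![Q x, Q (Q x), Q x, Q (Q x)] = R ![x, Q x, x, Q x] ∧
      R ![x, Q (Q x), x, Q (Q x)] = R ![x, Q x, x, Q x] := by
  have h := hRQ (Q x) (Q (Q x)) (Q x) (Q (Q x))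
  rw [hQ, map_neg_second, map_neg_fourth hpair, neg_neg, hRQ] at h
  refine ⟨hRQ x (Q x) x (Q x), ?_⟩
  rw [map_swap_left halt, map_swap_right halt hpair, neg_neg, h]

theorem map_orbit_mixed (halt : ∀ a z w, R ![a, a, z, w] = 0)
    (hpair : ∀ a b z w, R ![a, b, z, w] = R ![z, w, a, b]) {Q : V → V}
    (hRQ : ∀ a b z w, R ![Q a, Q b, Q z, Q w] = R ![a, b, z, w]) (hQ : ∀ y, Q (Q (Q y)) = -y)
    (x : V) :
    R ![x, Q x, Q x, Q (Q x)] = R ![x, Q x, x, Q (Q x)] ∧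
      R ![Q x, Q (Q x), x, Q (Q x)] = R ![x, Q x, x, Q (Q x)] := by
  have h₁ := hRQ x (Q x) x (Q (Q x))
  have h₂ := hRQ x (Q x) (Q x) (Q (Q x))
  rw [hQ, map_neg_fourth hpair, ← map_swap_right halt hpair] at h₁ h₂
  have h₃ : R ![x, Q x, Q x, Q (Q x)] = R ![x, Q x, x, Q (Q x)] := by rw [hpair, h₁]
  exact ⟨h₃, h₂.trans h₃⟩

theorem map_plane_of_cube_eq_neg (halt : ∀ a z w, R ![a, a, z, w] = 0)
    (hpair : ∀ a b z w, R ![a, b, z, w] = R ![z, w, a, b]) {Q : V →ₗ[k] V}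
    (hRQ : ∀ a b z w, R ![Q a, Q b, Q z, Q w] = R ![a, b, z, w]) (hQ : ∀ y, Q (Q (Q y)) = -y)
    (x : V) (a b d : k) {u : V} (hu : u = a • x + b • Q x + d • Q (Q x)) :
    R ![u, Q u, u, Q u] =
      ((a ^ 2 + b ^ 2 + d ^ 2) ^ 2 - (a * b + b * d - a * d) ^ 2) * R ![x, Q x, x, Q x] +
        2 * (a * b + b * d - a * d) * (a ^ 2 + b ^ 2 + d ^ 2 + (a * b + b * d - a * d)) *
          R ![x, Q x, x, Q (Q x)] := by
  obtain ⟨hK₂₃, hK₁₃⟩ := map_orbit_sectional halt hpair hRQ hQ x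
  obtain ⟨hL₁₂₂₃, hL₂₃₁₃⟩ := map_orbit_mixed halt hpair hRQ hQ x
  rw [hu, LinearMap.map_comb₃_of_cube_eq_neg hQ, apply_comb₃_of_curvature halt hpair,
    hK₂₃, hK₁₃, hL₁₂₂₃, hL₂₃₁₃]
  ring

end MultilinearMap

def qLinear : (Fin 3 → ℝ) →ₗ[ℝ] (Fin 3 → ℝ) where
  toFun := q
  map_add' y z := by ext i; fin_cases i <;> simp [q] <;> ring
  map_smul' c y := by ext i; fin_cases i <;> simp [q]

@[simp]
theorem qLinear_apply (y : Fin 3 → ℝ) : qLinear y = q y := rfl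

theorem q_q_q (y : Fin 3 → ℝ) : q (q (q y)) = -y := by
  ext i; fin_cases i <;> simp [q]

def gBilinear (A B : ℝ) : (Fin 3 → ℝ) →ₗ[ℝ] (Fin 3 → ℝ) →ₗ[ℝ] ℝ :=
  LinearMap.mk₂ ℝ (g A B)
    (fun _ _ _ => by simp only [g, Pi.add_apply]; ring)
    (fun _ _ _ => by simp only [g, Pi.smul_apply, smul_eq_mul]; ring)
    (fun _ _ _ => by simp only [g, Pi.add_apply]; ring)
    (fun _ _ _ => by simp only [g, Pi.smul_apply, smul_eq_mul]; ring)

@[simp]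
theorem gBilinear_apply (A B : ℝ) (y z : Fin 3 → ℝ) : gBilinear A B y z = g A B y z := rfl

theorem g_comm (A B : ℝ) (y z : Fin 3 → ℝ) : g A B y z = g A B z y := by
  simp only [g]; ring

theorem g_q_q (A B : ℝ) (y z : Fin 3 → ℝ) : g A B (q y) (q z) = g A B y z := by
  simp only [g, q, Matrix.cons_val_zero, Matrix.cons_val_one, Matrix.cons_val_two,
    Matrix.head_cons, Matrix.tail_cons]
  ring

theorem g_self_pos {A B : ℝ} (hAB : A > B) (hB : B > 0) {y : Fin 3 → ℝ} (hy : y ≠ 0) :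
    0 < g A B y y := by
  have hsq : 0 < y 0 ^ 2 + y 1 ^ 2 + y 2 ^ 2 := by
    by_contra! h
    refine hy (funext fun i => ?_)
    fin_cases i <;> simp <;> nlinarith [sq_nonneg (y 0), sq_nonneg (y 1), sq_nonneg (y 2)]
  have hg : g A B y y = (A - B) * (y 0 ^ 2 + y 1 ^ 2 + y 2 ^ 2) + B * (y 0 + y 1 + y 2) ^ 2 := by
    simp only [g]; ring
  rw [hg]
  nlinarith [sq_nonneg (y 0 + y 1 + y 2)]

theorem sec_of_norm_eq_one {A B : ℝ} (R : MultilinearMap ℝ (fun _ : Fin 4 => Fin 3 → ℝ) ℝ)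
    {u v : Fin 3 → ℝ} (hu : g A B u u = 1) (hv : g A B v v = 1) :
    sec A B R u v = R ![u, v, u, v] / (1 - g A B u v ^ 2) := by
  rw [sec, hu, hv, one_mul]

theorem g_sq_lt_one {A B : ℝ} (hAB : A > B) (hB : B > 0) {u v : Fin 3 → ℝ}
    (huv : LinearIndependent ℝ ![u, v]) (hu : g A B u u = 1) (hv : g A B v v = 1) :
    g A B u v ^ 2 < 1 := by
  have hne : v - g A B u v • u ≠ 0 := by
    intro h
    have := LinearIndependent.pair_iff.mp huv (-g A B u v) 1 (by rw [← h]; module)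
    exact one_ne_zero this.2
  -- `g(v - c u, v - c u) = 1 - c²` for `c = g(u, v)`
  have hpos := g_self_pos hAB hB hne
  simp only [← gBilinear_apply, map_sub, map_smul, LinearMap.sub_apply, LinearMap.smul_apply,
    smul_eq_mul] at hpos
  simp only [gBilinear_apply, hu, hv, g_comm A B v u] at hpos
  nlinarith

structure IsOrthonormalTriple (A B : ℝ) (e₁ e₂ e₃ : Fin 3 → ℝ) : Prop where
  norm₁ : g A B e₁ e₁ = 1
  norm₂ : g A B e₂ e₂ = 1
  norm₃ : g A B e₃ e₃ = 1
  orth₁₂ : g A B e₁ e₂ = 0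
  orth₁₃ : g A B e₁ e₃ = 0
  orth₂₃ : g A B e₂ e₃ = 0

namespace IsOrthonormalTriple

variable {A B : ℝ} {e₁ e₂ e₃ : Fin 3 → ℝ}

theorem g_comb₃ (h : IsOrthonormalTriple A B e₁ e₂ e₃) (a b d a' b' d' : ℝ) :
    g A B (a • e₁ + b • e₂ + d • e₃) (a' • e₁ + b' • e₂ + d' • e₃) = a * a' + b * b' + d * d' := by
  simp only [← gBilinear_apply, map_add, map_smul, LinearMap.add_apply, LinearMap.smul_apply,
    smul_eq_mul]
  simp only [gBilinear_apply, g_comm A B e₂ e₁, g_comm A B e₃ e₁, g_comm A B e₃ e₂, h.norm₁,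
    h.norm₂, h.norm₃, h.orth₁₂, h.orth₁₃, h.orth₂₃]
  ring

theorem linearIndependent (h : IsOrthonormalTriple A B e₁ e₂ e₃) :
    LinearIndependent ℝ ![e₁, e₂, e₃] := by
  refine Fintype.linearIndependent_iff.mpr fun c hc => ?_
  simp only [Fin.sum_univ_three, Matrix.cons_val_zero, Matrix.cons_val_one, Matrix.cons_val_two,
    Matrix.head_cons, Matrix.tail_cons] at hc
  have hsq := h.g_comb₃ (c 0) (c 1) (c 2) (c 0) (c 1) (c 2)
  simp only [hc, g, Pi.zero_apply, mul_zero, add_zero] at hsq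
  intro i
  fin_cases i <;> simp <;> nlinarith [sq_nonneg (c 0), sq_nonneg (c 1), sq_nonneg (c 2)]

theorem exists_eq_comb₃ (h : IsOrthonormalTriple A B e₁ e₂ e₃) (y : Fin 3 → ℝ) :
    ∃ a b d : ℝ, y = a • e₁ + b • e₂ + d • e₃ := by
  have hspan := h.linearIndependent.span_eq_top_of_card_eq_finrank (by simp)
  obtain ⟨c, hc⟩ :=
    (Submodule.mem_span_range_iff_exists_fun ℝ).mp (hspan ▸ Submodule.mem_top (x := y))
  refine ⟨c 0, c 1, c 2, ?_⟩
  simpa [Fin.sum_univ_three, eq_comm] using hc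

end IsOrthonormalTriple

theorem sectional_curvature_difference_general (A B : ℝ) (hAB : A > B) (hB : B > 0)
    (R : MultilinearMap ℝ (fun _ : Fin 4 => Fin 3 → ℝ) ℝ)
    (hsym1 : ∀ x y z u : Fin 3 → ℝ, R ![x, y, z, u] = -R ![y, x, z, u])
    (hsym3 : ∀ x y z u : Fin 3 → ℝ, R ![x, y, z, u] = R ![z, u, x, y])
    (hq : ∀ x y z u : Fin 3 → ℝ, R ![q x, q y, q z, q u] = R ![x, y, z, u])
    (x u : Fin 3 → ℝ)
    (hx1 : g A B x x = 1) (hx2 : g A B (q x) (q x) = 1)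
    (hx3 : g A B (q (q x)) (q (q x)) = 1)
    (hx4 : g A B x (q x) = 0) (hx5 : g A B x (q (q x)) = 0)
    (hx6 : g A B (q x) (q (q x)) = 0)
    (hu : LinearIndependent ℝ ![u, q u, q (q u)]) (huu : g A B u u = 1) :
    sec A B R u (q u) - sec A B R x (q x) =
      (2 * g A B u (q u) / (1 - g A B u (q u))) * R ![x, q x, x, q (q x)] := by
  have hx : IsOrthonormalTriple A B x (q x) (q (q x)) := ⟨hx1, hx2, hx3, hx4, hx5, hx6⟩
  obtain ⟨a, b, d, hu_eq⟩ := hx.exists_eq_comb₃ u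
  have hqu : q u = (-d) • x + a • q x + b • q (q x) := by
    rw [hu_eq]; exact LinearMap.map_comb₃_of_cube_eq_neg (Q := qLinear) q_q_q x a b d
  have hN : a ^ 2 + b ^ 2 + d ^ 2 = 1 := by
    rw [← huu, hu_eq, hx.g_comb₃]; ring
  have hc : a * b + b * d - a * d = g A B u (q u) := by
    rw [hqu, hu_eq, hx.g_comb₃]; ring
  have hR := MultilinearMap.map_plane_of_cube_eq_neg (fun a z w => by linarith [hsym1 a a z w])
    hsym3 (Q := qLinear) hq q_q_q x a b d hu_eq
  simp only [qLinear_apply, hN, hc] at hR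
  have hu_qu : LinearIndependent ℝ ![u, q u] := by
    convert hu.comp ![0, 1] (by decide) using 1
    ext i; fin_cases i <;> rfl
  have hc_sq : g A B u (q u) ^ 2 < 1 := g_sq_lt_one hAB hB hu_qu huu (by rw [g_q_q, huu])
  rw [sec_of_norm_eq_one R huu (by rw [g_q_q, huu]), sec_of_norm_eq_one R hx1 hx2, hR, hx4]
  set c := g A B u (q u)
  have hc_ne_one : 1 - c ≠ 0 := by nlinarith
  have hc_ne_neg_one : 1 + c ≠ 0 := by nlinarith
  rw [show 1 - c ^ 2 = (1 - c) * (1 + c) by ring]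
  field_simp
  ring

/-- if `{x,qx,q²x}` is `g`-orthonormal and `u` induces a `q`-basis with
`g(u,u) = 1`, then with `c = g(u,qu) = cos ∠(u,qu)`,
`μ(u,qu) - μ(x,qx) = (2c/(1-c))·R(x,qx,x,q²x)`. -/
theorem sectional_curvature_difference (A B : ℝ) (hAB : A > B) (hB : B > 0)
    (R : MultilinearMap ℝ (fun _ : Fin 4 => Fin 3 → ℝ) ℝ)
    (hsym1 : ∀ x y z u : Fin 3 → ℝ, R ![x, y, z, u] = -R ![y, x, z, u])
    (hsym2 : ∀ x y z u : Fin 3 → ℝ, R ![x, y, z, u] = -R ![x, y, u, z])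
    (hsym3 : ∀ x y z u : Fin 3 → ℝ, R ![x, y, z, u] = R ![z, u, x, y])
    (hq : ∀ x y z u : Fin 3 → ℝ, R ![q x, q y, q z, q u] = R ![x, y, z, u])
    (x u : Fin 3 → ℝ)
    (hx1 : g A B x x = 1) (hx2 : g A B (q x) (q x) = 1)
    (hx3 : g A B (q (q x)) (q (q x)) = 1)
    (hx4 : g A B x (q x) = 0) (hx5 : g A B x (q (q x)) = 0)
    (hx6 : g A B (q x) (q (q x)) = 0)
    (hu : LinearIndependent ℝ ![u, q u, q (q u)]) (huu : g A B u u = 1) :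
    sec A B R u (q u) - sec A B R x (q x) =
      (2 * g A B u (q u) / (1 - g A B u (q u))) * R ![x, q x, x, q (q x)] :=
  sectional_curvature_difference_general A B hAB hB R hsym1 hsym3 hq x u hx1 hx2 hx3 hx4 hx5 hx6 hu
    huu
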